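/- arXiv:2409.19465 — 5 statements merged into one kernel-verified Lean document; each statement's English description precedes it below -/
import Mathlib

section
/- No graph on n vertices is r-robust for any r > ⌈n/2⌉. -/
variable {V : Type*}

def rReachable [Fintype V] [DecidableEq V] (G : SimpleGraph V) [DecidableRel G.Adj]
    (S : Finset V) (r : ℕ) : Prop :=
  ∃ i ∈ S, r ≤ (G.neighborFinset i \ S).card

def rRobust [Fintype V] [DecidableEq V] (G : SimpleGraph V) [DecidableRel G.Adj]
    (r : ℕ) : Prop :=
  ∀ S₁ S₂ : Finset V, S₁.Nonempty → S₂.Nonempty → Disjoint S₁ S₂ →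
    rReachable G S₁ r ∨ rReachable G S₂ r

/-! Splitting the vertices into two halves `S`, `Sᶜ` of sizes `⌈n/2⌉` and `⌊n/2⌋`, a vertex of
either half has at most `⌈n/2⌉` neighbours outside its own half, so neither half is
`r`-reachable once `r > ⌈n/2⌉`. -/

section Robustness

variable [Fintype V] [DecidableEq V] {G : SimpleGraph V} [DecidableRel G.Adj]
  {S : Finset V} {r : ℕ}

theorem rReachable.le_card_compl (h : rReachable G S r) : r ≤ Sᶜ.card := by
  obtain ⟨i, -, hi⟩ := h
  exact hi.trans <| Finset.card_le_card fun v hv => by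
    simpa using (Finset.mem_sdiff.mp hv).2

theorem rRobust.le_card_compl_or_le_card (h : rRobust G r) (hS : S.Nonempty)
    (hSc : Sᶜ.Nonempty) : r ≤ Sᶜ.card ∨ r ≤ S.card := by
  refine (h S Sᶜ hS hSc disjoint_compl_right).imp rReachable.le_card_compl fun hc => ?_
  simpa using hc.le_card_compl

end Robustness

theorem stmt_2 [Fintype V] [DecidableEq V] (G : SimpleGraph V) [DecidableRel G.Adj]
    (hn : 2 ≤ Fintype.card V) (r : ℕ) (hr : (Fintype.card V + 1) / 2 < r) :
    ¬ rRobust G r := by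
  intro hrob
  obtain ⟨S, -, hS⟩ := Finset.exists_subset_card_eq
    (s := (Finset.univ : Finset V)) (n := (Fintype.card V + 1) / 2) (by rw [Finset.card_univ]; omega)
  have hSc : Sᶜ.card = Fintype.card V - (Fintype.card V + 1) / 2 := by
    rw [Finset.card_compl, hS]
  have hS_ne : S.Nonempty := Finset.card_pos.mp (by omega)
  have hSc_ne : Sᶜ.Nonempty := Finset.card_pos.mp (by omega)
  rcases hrob.le_card_compl_or_le_card hS_ne hSc_ne with h | h <;> omega
end

section
/- Any r-robust graph on 2r−1 vertices has at least 3r(r−1)/2 edges. -/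
variable {V : Type*}

/-! Robustness applied to a set `S` of at most `r - 1` vertices and its complement always
yields a vertex of `S` with at least `r` neighbours outside `S`, since the complement side
has at most `r - 1` vertices to reach. For `#S = r - 1` the outside has exactly `r` vertices,
so that vertex sees all of them; this extends any clique of size `< r`, giving an `r`-clique
`R`. Removing the `r - 1` vertices off `R` one at a time, each carries `r` edges not yet
counted, so at least `r (r - 1)` edges meet them, and `R` spans `r (r - 1) / 2` further edges. -/

open Finset

namespace SimpleGraph

variable [Fintype V] [DecidableEq V] (G : SimpleGraph V) [DecidableRel G.Adj]

def edgesMeeting (S : Finset V) : Finset (Sym2 V) :=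
  G.edgeFinset.filter fun e => ∃ v ∈ S, v ∈ e

variable {G}

lemma card_edgesMeeting_add_le_insert {S : Finset V} {v : V} (hv : v ∉ S) :
    #(G.edgesMeeting S) + #(G.neighborFinset v \ S) ≤ #(G.edgesMeeting (insert v S)) := by
  set new := (G.neighborFinset v \ S).image fun w => s(v, w)
  have hnew : #new = #(G.neighborFinset v \ S) :=
    card_image_of_injective _ fun _ _ => Sym2.congr_right.mp
  have hdisj : Disjoint (G.edgesMeeting S) new := by
    refine Finset.disjoint_left.mpr fun e he hnew => ?_
    obtain ⟨w, hw, rfl⟩ := mem_image.mp hnew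
    obtain ⟨-, u, hu, hue⟩ := mem_filter.mp he
    rcases Sym2.mem_iff.mp hue with rfl | rfl
    · exact hv hu
    · exact (mem_sdiff.mp hw).2 hu
  have hsub : G.edgesMeeting S ∪ new ⊆ G.edgesMeeting (insert v S) := by
    intro e he
    rcases mem_union.mp he with he | he
    · obtain ⟨he, u, hu, hue⟩ := mem_filter.mp he
      exact mem_filter.mpr ⟨he, u, mem_insert_of_mem hu, hue⟩
    · obtain ⟨w, hw, rfl⟩ := mem_image.mp he
      have hvw : G.Adj v w := (mem_neighborFinset _ _ _).mp (mem_sdiff.mp hw).1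
      exact mem_filter.mpr ⟨mem_edgeFinset.mpr hvw, v, mem_insert_self _ _, Sym2.mem_mk_left _ _⟩
  rw [← hnew, ← card_union_of_disjoint hdisj]
  exact card_le_card hsub

lemma IsClique.card_edgesMeeting_add_choose_le {S T : Finset V} (hT : G.IsClique (T : Set V))
    (hST : Disjoint S T) :
    #(G.edgesMeeting S) + (#T).choose 2 ≤ #(G.edgesMeeting (S ∪ T)) := by
  induction T using Finset.induction_on generalizing S with
  | empty => simp
  | insert v T hvT ih =>
    rw [coe_insert, isClique_insert] at hT
    have hvS : v ∉ S := disjoint_right.mp hST (mem_insert_self v T)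
    have hT_nbrs : T ⊆ G.neighborFinset v \ S := fun w hw =>
      mem_sdiff.mpr ⟨(mem_neighborFinset _ _ _).mpr (hT.2 w hw (ne_of_mem_of_not_mem hw hvT).symm),
        disjoint_right.mp hST (mem_insert_of_mem hw)⟩
    have hstep := card_edgesMeeting_add_le_insert (G := G) hvS
    have hrest := ih hT.1 (disjoint_insert_left.mpr ⟨hvT, (disjoint_insert_right.mp hST).2⟩)
    rw [insert_union, ← union_insert] at hrest
    have hchoose : (#T + 1).choose 2 = (#T).choose 2 + #T := by
      rw [Nat.choose_succ_succ', Nat.choose_one_right, add_comm]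
    rw [card_insert_of_notMem hvT, hchoose]
    have := card_le_card hT_nbrs
    omega

end SimpleGraph

namespace rRobust

variable [Fintype V] [DecidableEq V] {G : SimpleGraph V} [DecidableRel G.Adj] {r : ℕ}

lemma rReachable_of_card_lt (h : rRobust G r) {S : Finset V} (hS : S.Nonempty)
    (hSr : #S < r) (hSV : #S < Fintype.card V) : rReachable G S r := by
  have hT : (univ \ S).Nonempty := by
    rw [← card_pos, card_univ_sdiff]
    omega
  refine (h S (univ \ S) hS hT disjoint_sdiff).resolve_right ?_
  rintro ⟨u, -, hu⟩
  have hsub : G.neighborFinset u \ (univ \ S) ⊆ S := fun w hw => by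
    simpa using (mem_sdiff.mp hw).2
  have := card_le_card hsub
  omega

lemma mul_card_le_card_edgesMeeting (h : rRobust G r) (S : Finset V) (hSr : #S < r)
    (hSV : #S < Fintype.card V) : r * #S ≤ #(G.edgesMeeting S) := by
  induction S using Finset.strongInduction with
  | H S ih =>
    rcases S.eq_empty_or_nonempty with rfl | hS
    · simp
    obtain ⟨v, hv, hvr⟩ := h.rReachable_of_card_lt hS hSr hSV
    have hcard : #(S.erase v) + 1 = #S := card_erase_add_one hv
    have hrest := ih (S.erase v) (erase_ssubset hv) (by omega) (by omega)
    have hstep := SimpleGraph.card_edgesMeeting_add_le_insert (G := G) (notMem_erase v S)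
    rw [insert_erase hv] at hstep
    have := card_le_card (sdiff_subset_sdiff subset_rfl (erase_subset v S) :
      G.neighborFinset v \ S ⊆ G.neighborFinset v \ S.erase v)
    rw [← hcard, Nat.mul_succ]
    omega

lemma exists_isNClique (h : rRobust G r) (hr : 1 ≤ r) (hcard : Fintype.card V = 2 * r - 1) :
    ∃ R : Finset V, G.IsNClique r R := by
  suffices ∀ k, 1 ≤ k → k ≤ r → ∃ I : Finset V, G.IsNClique k I from this r hr le_rfl
  intro k hk
  induction k, hk using Nat.le_induction with
  | base =>
    intro _
    obtain ⟨v⟩ : Nonempty V := Fintype.card_pos_iff.mp (by omega)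
    exact ⟨{v}, SimpleGraph.isNClique_one.mpr ⟨v, rfl⟩⟩
  | succ k hk ih =>
    intro hkr
    obtain ⟨I, hI⟩ := ih (by omega)
    obtain ⟨S, hSI, hS⟩ := exists_subset_card_eq (s := univ \ I) (n := r - 1)
      (by rw [card_univ_sdiff, hI.card_eq]; omega)
    obtain ⟨v, hv, hvr⟩ :=
      h.rReachable_of_card_lt (S := S) (card_pos.mp (by omega)) (by omega) (by omega)
    have hfull : G.neighborFinset v \ S = univ \ S :=
      eq_of_subset_of_card_le (sdiff_subset_sdiff (subset_univ _) subset_rfl)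
        (by rw [card_univ_sdiff]; omega)
    refine ⟨insert v I, hI.insert fun w hw => ?_⟩
    have hwS : w ∈ univ \ S := mem_sdiff.mpr ⟨mem_univ w, fun hwS => (mem_sdiff.mp (hSI hwS)).2 hw⟩
    rw [← hfull] at hwS
    exact (G.mem_neighborFinset v w).mp (mem_sdiff.mp hwS).1

end rRobust

theorem stmt_6 [Fintype V] [DecidableEq V] (G : SimpleGraph V) [DecidableRel G.Adj]
    (r : ℕ) (hr : 1 ≤ r) (hcard : Fintype.card V = 2 * r - 1)
    (h : rRobust G r) : 3 * r * (r - 1) / 2 ≤ G.edgeFinset.card := by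
  obtain ⟨R, hR⟩ := h.exists_isNClique hr hcard
  have hS₀ : #(univ \ R) = r - 1 := by
    rw [card_univ_sdiff, hR.card_eq]
    omega
  have hmeet := h.mul_card_le_card_edgesMeeting (univ \ R) (by omega) (by omega)
  have hclique := hR.isClique.card_edgesMeeting_add_choose_le (S := univ \ R) sdiff_disjoint
  have hall : #(G.edgesMeeting (univ \ R ∪ R)) ≤ #G.edgeFinset := card_le_card (filter_subset _ _)
  rw [hS₀] at hmeet
  rw [hR.card_eq, Nat.choose_two_right] at hclique
  rw [mul_assoc]
  generalize r * (r - 1) = p at *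
  omega
end

section
/- Let G be a graph on 2r−1 vertices, and let K be a set of r−1 vertices each of which is adjacent to all other vertices of G. If the induced subgraph on the remaining r vertices is connected, then G is r-robust. -/
variable {V : Type*}

theorem stmt_12 [Fintype V] [DecidableEq V] (G : SimpleGraph V) [DecidableRel G.Adj]
    (r : ℕ) (hr : 1 ≤ r) (hcard : Fintype.card V = 2 * r - 1)
    (K : Finset V) (hK : K.card = r - 1)
    (hKadj : ∀ i ∈ K, ∀ j : V, j ≠ i → G.Adj i j)
    (hconn : (G.induce (↑(Finset.univ \ K) : Set V)).Connected) :
    rRobust G r := by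
  have key : ∀ S : Finset V, S.Nonempty → S.card ≤ r - 1 → rReachable G S r := by
    intro S hS hScard
    by_cases hSK : (S ∩ K).Nonempty
    · obtain ⟨k, hk⟩ := hSK
      obtain ⟨hkS, hkK⟩ := Finset.mem_inter.1 hk
      refine ⟨k, hkS, ?_⟩
      have hsub : Finset.univ \ S ⊆ G.neighborFinset k \ S := by
        intro x hx
        simp only [Finset.mem_sdiff, Finset.mem_univ, true_and] at hx
        simp only [Finset.mem_sdiff, SimpleGraph.mem_neighborFinset]
        exact ⟨hKadj k hkK x (fun h => hx (h ▸ hkS)), hx⟩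
      calc r ≤ (Finset.univ \ S).card := by
            rw [Finset.card_sdiff_of_subset (Finset.subset_univ S), Finset.card_univ, hcard]; omega
        _ ≤ _ := Finset.card_le_card hsub
    · -- S is disjoint from K, so S ⊆ univ \ K
      have hdisjK : ∀ x ∈ S, x ∉ K := by
        intro x hxS hxK
        exact hSK ⟨x, Finset.mem_inter.2 ⟨hxS, hxK⟩⟩
      set T : Finset V := Finset.univ \ K with hT
      have hTcard : T.card = r := by
        rw [hT, Finset.card_sdiff_of_subset (Finset.subset_univ K), Finset.card_univ, hcard, hK]; omega
      have hST : S ⊆ T := by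
        intro x hx; rw [hT, Finset.mem_sdiff]; exact ⟨Finset.mem_univ x, hdisjK x hx⟩
      obtain ⟨a, haS⟩ := hS
      have hlt : S.card < T.card := by omega
      obtain ⟨b, hbT, hbS⟩ : ∃ b ∈ T, b ∉ S := by
        by_contra h
        push_neg at h
        exact absurd (Finset.card_le_card h) (by omega)
      have haT : a ∈ T := hST haS
      have ha' : (a : V) ∈ (↑(Finset.univ \ K) : Set V) := by
        simpa using hdisjK a haS
      have hbK : b ∉ K := by
        rw [hT, Finset.mem_sdiff] at hbT; exact hbT.2
      have hb' : (b : V) ∈ (↑(Finset.univ \ K) : Set V) := by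
        simpa using hbK
      obtain ⟨p⟩ := hconn.preconnected ⟨a, ha'⟩ ⟨b, hb'⟩
      have hex := p.exists_boundary_dart {x | (x : V) ∈ S} haS hbS
      obtain ⟨d, _, hdfst, hdsnd⟩ := hex
      set v : V := (d.fst : V) with hv
      set w : V := (d.snd : V) with hw
      have hvS : v ∈ S := hdfst
      have hwS : w ∉ S := hdsnd
      have hadj : G.Adj v w := d.adj
      have hwT : w ∈ T := by
        have h2 := d.snd.2
        exact h2
      have hwK : w ∉ K := by
        rw [hT, Finset.mem_sdiff] at hwT; exact hwT.2
      refine ⟨v, hvS, ?_⟩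
      have hsub : insert w K ⊆ G.neighborFinset v \ S := by
        intro x hx
        rcases Finset.mem_insert.1 hx with h | h
        · subst h
          simp only [Finset.mem_sdiff, SimpleGraph.mem_neighborFinset]
          exact ⟨hadj, hwS⟩
        · simp only [Finset.mem_sdiff, SimpleGraph.mem_neighborFinset]
          refine ⟨(hKadj x h v (fun hvx => hdisjK v hvS (hvx ▸ h))).symm,
            fun hxS => hdisjK x hxS h⟩
      calc r = (insert w K).card := by rw [Finset.card_insert_of_notMem hwK, hK]; omega
        _ ≤ _ := Finset.card_le_card hsub
  intro S₁ S₂ h1 h2 hd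
  have hsum : S₁.card + S₂.card ≤ 2 * r - 1 := by
    rw [← Finset.card_union_of_disjoint hd, ← hcard]
    exact Finset.card_le_univ _
  have h1' := h1.card_pos
  have h2' := h2.card_pos
  rcases le_or_gt S₁.card (r - 1) with h | h
  · exact Or.inl (key S₁ h1 h)
  · exact Or.inr (key S₂ h2 (by omega))
end

section
/- Let G be a graph on 2r vertices constructed as follows: take a set K of r vertices each adjacent to all other 2r−1 vertices, then choose δ vertices of K (δ = r−1 if r is odd, δ = r−2 if r is even), pair them into δ/2 disjoint pairs, and remove the edge within each pair. Then G is r-robust. -/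
variable {V : Type*}

private lemma sym2_filter_card_le [Fintype V] [DecidableEq V] (e : Sym2 V) :
    (Finset.univ.filter (· ∈ e)).card ≤ 2 := by
  induction e using Sym2.ind with
  | _ a b =>
    have hsub : Finset.univ.filter (· ∈ s(a, b)) ⊆ {a, b} := by
      intro x hx
      simp only [Finset.mem_filter, Sym2.mem_iff] at hx
      simp [hx.2]
    calc (Finset.univ.filter (· ∈ s(a, b))).card ≤ ({a, b} : Finset V).card :=
          Finset.card_le_card hsub
      _ ≤ 2 := Finset.card_insert_le _ _ |>.trans (by simp)

private lemma key_lemma [Fintype V] [DecidableEq V] (G : SimpleGraph V) [DecidableRel G.Adj]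
    (r : ℕ) (hr : 1 ≤ r) (hcard : Fintype.card V = 2 * r)
    (K : Finset V) (hK : K.card = r)
    (δ : ℕ) (hδ : δ = if Odd r then r - 1 else r - 2)
    (P : Finset (Sym2 V)) (hPcard : P.card = δ / 2)
    (hPK : ∀ e ∈ P, ∀ v ∈ e, v ∈ K)
    (hPnd : ∀ e ∈ P, ¬ e.IsDiag)
    (hPdisj : ∀ e ∈ P, ∀ f ∈ P, e ≠ f → ∀ v ∈ e, v ∉ f)
    (hAdj : ∀ i j : V, G.Adj i j ↔ i ≠ j ∧ (i ∈ K ∨ j ∈ K) ∧ s(i, j) ∉ P)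
    (S₁ S₂ : Finset V) (h1 : S₁.Nonempty) (h2 : S₂.Nonempty)
    (hd : Disjoint S₁ S₂) (hle : S₁.card ≤ S₂.card) :
    rReachable G S₁ r ∨ rReachable G S₂ r := by
  have hsum : S₁.card + S₂.card ≤ 2 * r := by
    have := Finset.card_le_card (Finset.subset_univ (S₁ ∪ S₂))
    rw [Finset.card_union_of_disjoint hd, Finset.card_univ, hcard] at this
    exact this
  have hS1r : S₁.card ≤ r := by omega
  by_cases hex : ∃ k ∈ S₁, k ∈ K
  · obtain ⟨k, hkS, hkK⟩ := hex
    by_cases hlt : S₁.card < r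
    · -- small set containing a K vertex
      left
      refine ⟨k, hkS, ?_⟩
      -- nonneighbors of k other than k form a set of size ≤ 1
      have hT : ∃ t : Finset V, t.card ≤ 1 ∧ ∀ j, j ≠ k → ¬ G.Adj k j → j ∈ t := by
        by_cases hp : ∃ e ∈ P, k ∈ e
        · obtain ⟨e, heP, hke⟩ := hp
          obtain ⟨j₀, rfl⟩ := Sym2.mem_iff_exists.mp hke
          refine ⟨{j₀}, by simp, ?_⟩
          intro j hjk hnadj
          rw [hAdj] at hnadj
          push_neg at hnadj
          have hkj0 : k ≠ j₀ := by
            intro h; exact hPnd _ heP (by simp [← h, Sym2.isDiag_iff_proj_eq])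
          have hmem : s(k, j) ∈ P := hnadj (Ne.symm hjk) (Or.inl hkK)
          have : s(k, j) = s(k, j₀) := by
            by_contra hne
            exact hPdisj _ hmem _ heP hne k (Sym2.mem_mk_left k j) (Sym2.mem_mk_left k j₀)
          rcases Sym2.eq_iff.mp this with ⟨_, rfl⟩ | ⟨h1', h2'⟩
          · simp
          · exact absurd h1' hkj0
        · refine ⟨∅, by simp, ?_⟩
          intro j hjk hnadj
          rw [hAdj] at hnadj
          push_neg at hnadj
          have hmem : s(k, j) ∈ P := hnadj (Ne.symm hjk) (Or.inl hkK)
          exact absurd ⟨s(k, j), hmem, Sym2.mem_mk_left k j⟩ hp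
      obtain ⟨t, htc, ht⟩ := hT
      have hsub : Finset.univ \ (S₁ ∪ t) ⊆ G.neighborFinset k \ S₁ := by
        intro j hj
        simp only [Finset.mem_sdiff, Finset.mem_union, Finset.mem_univ, true_and,
          not_or] at hj
        obtain ⟨hjS, hjt⟩ := hj
        have hjk : j ≠ k := fun h => hjS (h ▸ hkS)
        have hadj : G.Adj k j := by
          by_contra hna
          exact hjt (ht j hjk hna)
        simp [Finset.mem_sdiff, SimpleGraph.mem_neighborFinset, hadj, hjS]
      have hc1 : (S₁ ∪ t).card ≤ S₁.card + 1 :=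
        (Finset.card_union_le _ _).trans (by omega)
      have hc2 : (Finset.univ \ (S₁ ∪ t)).card = Fintype.card V - (S₁ ∪ t).card := by
        rw [Finset.card_sdiff_of_subset (Finset.subset_univ _), Finset.card_univ]
      have := Finset.card_le_card hsub
      omega
    · -- both sets have size r, find an unpaired vertex of K
      have hS1 : S₁.card = r := by omega
      have hS2 : S₂.card = r := by omega
      have huniv : S₁ ∪ S₂ = Finset.univ := by
        apply Finset.eq_univ_of_card
        rw [Finset.card_union_of_disjoint hd, hcard]; omega
      -- covered vertices
      set C : Finset V := P.biUnion (fun e => Finset.univ.filter (· ∈ e)) with hC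
      have hCcard : C.card ≤ 2 * P.card := by
        calc C.card ≤ ∑ e ∈ P, (Finset.univ.filter (· ∈ e)).card :=
              Finset.card_biUnion_le
          _ ≤ ∑ _e ∈ P, 2 := Finset.sum_le_sum (fun e _ => sym2_filter_card_le e)
          _ = 2 * P.card := by rw [Finset.sum_const, smul_eq_mul, mul_comm]
      have hδr : δ < r := by
        rcases Nat.even_or_odd r with he | ho
        · have : ¬ Odd r := by simp [Nat.not_odd_iff_even.mpr he]
          rw [hδ, if_neg this]; omega
        · rw [hδ, if_pos ho]; omega
      have hClt : C.card < K.card := by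
        have : 2 * P.card ≤ δ := by rw [hPcard]; omega
        omega
      have hexk : ∃ k₀ ∈ K, k₀ ∉ C := by
        by_contra hcon
        push_neg at hcon
        exact absurd (Finset.card_le_card hcon) (by omega)
      obtain ⟨k₀, hk₀K, hk₀C⟩ := hexk
      have hunpaired : ∀ e ∈ P, k₀ ∉ e := by
        intro e heP hke
        exact hk₀C (Finset.mem_biUnion.mpr ⟨e, heP, by simp [hke]⟩)
      -- k₀ is adjacent to everything else
      have hadjall : ∀ j, j ≠ k₀ → G.Adj k₀ j := by
        intro j hj
        rw [hAdj]
        exact ⟨Ne.symm hj, Or.inl hk₀K,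
          fun h => hunpaired _ h (Sym2.mem_mk_left k₀ j)⟩
      have hmem : k₀ ∈ S₁ ∪ S₂ := huniv ▸ Finset.mem_univ k₀
      have hreach : ∀ A B : Finset V, Disjoint A B → B.card = r → k₀ ∈ A →
          rReachable G A r := by
        intro A B hAB hBr hk₀A
        refine ⟨k₀, hk₀A, ?_⟩
        have hsub : B ⊆ G.neighborFinset k₀ \ A := by
          intro j hjB
          have hjA : j ∉ A := Finset.disjoint_left.mp hAB.symm hjB
          have hjk : j ≠ k₀ := fun h => hjA (h ▸ hk₀A)
          simp [Finset.mem_sdiff, SimpleGraph.mem_neighborFinset, hadjall j hjk, hjA]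
        calc r = B.card := hBr.symm
          _ ≤ _ := Finset.card_le_card hsub
      rcases Finset.mem_union.mp hmem with h | h
      · exact Or.inl (hreach S₁ S₂ hd hS2 h)
      · exact Or.inr (hreach S₂ S₁ hd.symm hS1 h)
  · -- S₁ avoids K entirely
    left
    push_neg at hex
    obtain ⟨v, hv⟩ := h1
    refine ⟨v, hv, ?_⟩
    have hvK : v ∉ K := hex v hv
    have hsub : K ⊆ G.neighborFinset v \ S₁ := by
      intro k hkK
      have hkS : k ∉ S₁ := fun h => hex k h hkK
      have hvk : v ≠ k := fun h => hvK (h ▸ hkK)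
      have hadj : G.Adj v k := by
        rw [hAdj]
        refine ⟨hvk, Or.inr hkK, fun h => hvK (hPK _ h v (Sym2.mem_mk_left v k))⟩
      simp [Finset.mem_sdiff, SimpleGraph.mem_neighborFinset, hadj, hkS]
    calc r = K.card := hK.symm
      _ ≤ _ := Finset.card_le_card hsub

theorem stmt_14 [Fintype V] [DecidableEq V] (G : SimpleGraph V) [DecidableRel G.Adj]
    (r : ℕ) (hr : 1 ≤ r) (hcard : Fintype.card V = 2 * r)
    (K : Finset V) (hK : K.card = r)
    (δ : ℕ) (hδ : δ = if Odd r then r - 1 else r - 2)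
    (P : Finset (Sym2 V)) (hPcard : P.card = δ / 2)
    (hPK : ∀ e ∈ P, ∀ v ∈ e, v ∈ K)
    (hPnd : ∀ e ∈ P, ¬ e.IsDiag)
    (hPdisj : ∀ e ∈ P, ∀ f ∈ P, e ≠ f → ∀ v ∈ e, v ∉ f)
    (hAdj : ∀ i j : V, G.Adj i j ↔ i ≠ j ∧ (i ∈ K ∨ j ∈ K) ∧ s(i, j) ∉ P) :
    rRobust G r := by
  intro S₁ S₂ h1 h2 hd
  rcases le_total S₁.card S₂.card with hle | hle
  · exact key_lemma G r hr hcard K hK δ hδ P hPcard hPK hPnd hPdisj hAdj S₁ S₂ h1 h2 hd hle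
  · exact (key_lemma G r hr hcard K hK δ hδ P hPcard hPK hPnd hPdisj hAdj S₂ S₁ h2 h1 hd.symm
      hle).symm
end

section
/- Any r-robust graph on 2r−1 vertices contains a vertex adjacent to all other vertices. -/
variable {V : Type*}

theorem stmt_18 [Fintype V] [DecidableEq V] (G : SimpleGraph V) [DecidableRel G.Adj]
    (r : ℕ) (hr : 1 ≤ r) (hcard : Fintype.card V = 2 * r - 1)
    (h : rRobust G r) : ∃ v : V, ∀ u : V, u ≠ v → G.Adj v u := by
  by_contra hcon
  push_neg at hcon
  -- hcon : ∀ v, ∃ u, u ≠ v ∧ ¬ G.Adj v u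
  rcases Nat.lt_or_ge r 2 with hr1 | hr2
  · -- r = 1, card V = 1
    have hr' : r = 1 := by omega
    subst hr'
    simp only [show 2 * 1 - 1 = 1 from rfl] at hcard
    obtain ⟨v, hv⟩ := Fintype.card_eq_one_iff.mp hcard
    obtain ⟨u, hu, _⟩ := hcon v
    exact hu (hv u)
  · -- main case: r ≥ 2
    classical
    -- maximum clique I
    set P : Finset V → Prop := fun t => ∀ x ∈ t, ∀ y ∈ t, x ≠ y → G.Adj x y with hP
    have hPdec : DecidablePred P := by
      intro t; rw [hP]; infer_instance
    set s : Finset (Finset V) := Finset.univ.powerset.filter P with hs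
    have hsne : s.Nonempty := ⟨∅, by simp [hs, hP]⟩
    obtain ⟨I, hIs, hImax⟩ := Finset.exists_max_image s Finset.card hsne
    have hIclique : P I := (Finset.mem_filter.mp hIs).2
    have hmax : ∀ t : Finset V, P t → t.card ≤ I.card := by
      intro t ht
      exact hImax t (Finset.mem_filter.mpr ⟨Finset.mem_powerset.mpr (Finset.subset_univ t), ht⟩)
    -- Claim A : vertices outside I have a non-neighbor in I
    have claimA : ∀ v ∉ I, ∃ y ∈ I, y ≠ v ∧ ¬ G.Adj v y := by
      intro v hv
      by_contra hc
      push_neg at hc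
      have hcl : P (insert v I) := by
        intro x hx y hy hxy
        rw [Finset.mem_insert] at hx hy
        rcases hx with hx | hx
        · rcases hy with hy | hy
          · exact absurd (hx.trans hy.symm) hxy
          · subst hx; exact hc y hy (fun hyv => hxy hyv.symm)
        · rcases hy with hy | hy
          · subst hy; exact (hc x hx hxy).symm
          · exact hIclique x hx y hy hxy
      have := hmax (insert v I) hcl
      rw [Finset.card_insert_of_notMem hv] at this
      omega
    -- Claim B : vertices in I have a non-neighbor outside I
    have claimB : ∀ v ∈ I, ∃ y ∉ I, y ≠ v ∧ ¬ G.Adj v y := by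
      intro v hv
      obtain ⟨u, hune, huadj⟩ := hcon v
      refine ⟨u, ?_, hune, huadj⟩
      intro huI
      exact huadj (hIclique v hv u huI (fun hvu => hune hvu.symm))
    -- D : small dominating set in the complement graph
    set D : Finset V := if I.card ≤ r - 1 then I else Iᶜ with hD
    have hDcard : D.card ≤ r - 1 := by
      rw [hD]
      split_ifs with hle
      · exact hle
      · rw [Finset.card_compl, hcard]; omega
    have hDdom : ∀ x ∉ D, ∃ y ∈ D, y ≠ x ∧ ¬ G.Adj x y := by
      intro x hx
      rw [hD] at hx ⊢
      split_ifs at hx ⊢ with hle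
      · exact claimA x hx
      · have hxI : x ∈ I := by
          by_contra hxI
          exact hx (Finset.mem_compl.mpr hxI)
        obtain ⟨y, hyI, hyne, hyadj⟩ := claimB x hxI
        exact ⟨y, Finset.mem_compl.mpr hyI, hyne, hyadj⟩
    -- extend D to S₂ of size r
    have hrle : r ≤ Fintype.card V := by omega
    obtain ⟨S₂, hDS₂, _, hS₂card⟩ :=
      Finset.exists_subsuperset_card_eq (n := r) (Finset.subset_univ D)
        (hDcard.trans (by omega)) (by rw [Finset.card_univ, hcard]; omega)
    set S₁ : Finset V := S₂ᶜ with hS₁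
    have hS₁card : S₁.card = r - 1 := by
      rw [hS₁, Finset.card_compl, hS₂card, hcard]; omega
    have hS₁ne : S₁.Nonempty := Finset.card_pos.mp (by omega)
    have hS₂ne : S₂.Nonempty := Finset.card_pos.mp (by omega)
    have hdisj : Disjoint S₁ S₂ := by
      rw [hS₁]; exact disjoint_compl_left
    rcases h S₁ S₂ hS₁ne hS₂ne hdisj with ⟨x, hx, hxr⟩ | ⟨w, hw, hwr⟩
    · -- S₁ reachable : contradiction
      have hxD : x ∉ D := fun hxD =>
        (Finset.mem_compl.mp (hS₁ ▸ hx)) (hDS₂ hxD)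
      obtain ⟨y, hyD, hyne, hyadj⟩ := hDdom x hxD
      have hsub : G.neighborFinset x \ S₁ ⊆ S₂ \ {y} := by
        intro z hz
        rw [Finset.mem_sdiff] at hz ⊢
        obtain ⟨hz1, hz2⟩ := hz
        rw [SimpleGraph.mem_neighborFinset] at hz1
        constructor
        · rw [hS₁, Finset.notMem_compl] at hz2; exact hz2
        · simp only [Finset.mem_singleton]
          rintro rfl
          exact hyadj hz1
      have := Finset.card_le_card hsub
      have hyS₂ : y ∈ S₂ := hDS₂ hyD
      have : (S₂ \ {y}).card = r - 1 := by
        rw [Finset.sdiff_singleton_eq_erase, Finset.card_erase_of_mem hyS₂, hS₂card]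
      omega
    · -- S₂ reachable : contradiction
      have hsub : G.neighborFinset w \ S₂ ⊆ S₁ := by
        intro z hz
        rw [Finset.mem_sdiff] at hz
        rw [hS₁, Finset.mem_compl]
        exact hz.2
      have := Finset.card_le_card hsub
      omega
end
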